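/- Let P ∈ ℝ^{2n×2n} be symmetric positive definite, V(Ξ) = ΞᵀPΞ, A and B as in the double-integrator structure, and suppose for every Ξ there exists u with 2ΞᵀP(AΞ + Bu) + εΞᵀPΞ ≤ 0. If additionally g̃_T is right invertible and g_C, g_T are defined via g_C(ξ) = B g̃_C(ξ + ξ^des), g_T = B g̃_T, then for every state Ξ and every charge q* ∈ ℝ^N, there exists T* ∈ ℝ^{dN} such that L_fV(Ξ) + L_{g_C}V(Ξ)·vec(q*q*ᵀ) + L_{g_T}V(Ξ)·T* + εV(Ξ) ≤ 0. -/
import Mathlib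


open Matrix

/-- Feasibility of the thrust QP.  With `V(Ξ) = ΞᵀPΞ` (`P` symmetric
positive definite), double-integrator `A = [[0,I],[0,0]]`, `B = [[0],[I]]`, the CLF
property `∀ Ξ ∃ u, 2ΞᵀP(AΞ+Bu) + εΞᵀPΞ ≤ 0`, and `g̃_T` right invertible, then for
every state `Ξ` and every charge `q`, there is a thrust `T` with
`L_fV + L_{g_C}V·vec(qqᵀ) + L_{g_T}V·T + εV ≤ 0`, where `g_C(ξ) = B g̃_C(ξ+ξᵈᵉˢ)`,
`g_T = B g̃_T`, and `∂V/∂Ξ = 2ΞᵀP`. -/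
theorem stmt12 (n N mth : ℕ)
    (P : Matrix (Fin n ⊕ Fin n) (Fin n ⊕ Fin n) ℝ) (hPsym : Pᵀ = P)
    (hPpd : P.PosDef)
    (A : Matrix (Fin n ⊕ Fin n) (Fin n ⊕ Fin n) ℝ)
    (B : Matrix (Fin n ⊕ Fin n) (Fin n) ℝ)
    (hA : A = Matrix.fromBlocks 0 1 0 0)
    (hB : B = Matrix.fromRows 0 1)
    (ε : ℝ) (hε : 0 < ε)
    (hCLF : ∀ Ξ : Fin n ⊕ Fin n → ℝ, ∃ u : Fin n → ℝ,
      2 * (Ξ ⬝ᵥ P.mulVec (A.mulVec Ξ + B.mulVec u)) + ε * (Ξ ⬝ᵥ P.mulVec Ξ) ≤ 0)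
    (gTildeC : (Fin n → ℝ) → Matrix (Fin n) (Fin N × Fin N) ℝ)
    (gTildeT : Matrix (Fin n) (Fin mth) ℝ)
    (G : Matrix (Fin mth) (Fin n) ℝ) (hG : gTildeT * G = 1)
    (ξdes : Fin n → ℝ) :
    ∀ (Ξ : Fin n ⊕ Fin n → ℝ) (q : Fin N → ℝ),
      ∃ T : Fin mth → ℝ,
        ((2 : ℝ) • P.mulVec Ξ) ⬝ᵥ A.mulVec Ξ
          + ((2 : ℝ) • P.mulVec Ξ) ⬝ᵥ
              (B * gTildeC (fun i => Ξ (Sum.inl i) + ξdes i)).mulVec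
                (fun p => q p.1 * q p.2)
          + ((2 : ℝ) • P.mulVec Ξ) ⬝ᵥ (B * gTildeT).mulVec T
          + ε * (Ξ ⬝ᵥ P.mulVec Ξ) ≤ 0 := by
  intro Ξ q
  obtain ⟨u, hu⟩ := hCLF Ξ
  set gC := gTildeC (fun i => Ξ (Sum.inl i) + ξdes i)
  set qq : Fin N × Fin N → ℝ := fun p => q p.1 * q p.2
  refine ⟨G.mulVec (u - gC.mulVec qq), ?_⟩
  have h2 : gTildeT.mulVec (G.mulVec (u - gC.mulVec qq)) = u - gC.mulVec qq := by
    rw [Matrix.mulVec_mulVec, hG, Matrix.one_mulVec]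
  have hT : (B * gTildeT).mulVec (G.mulVec (u - gC.mulVec qq))
      = B.mulVec (u - gC.mulVec qq) := by
    rw [← Matrix.mulVec_mulVec, h2]
  rw [hT, ← Matrix.mulVec_mulVec]
  have key : ∀ v, ((2 : ℝ) • P.mulVec Ξ) ⬝ᵥ v = 2 * (Ξ ⬝ᵥ P.mulVec v) := by
    intro v
    rw [smul_dotProduct, ← Matrix.vecMul_transpose, ← Matrix.dotProduct_mulVec,
      hPsym, smul_eq_mul]
  rw [key, key, key]
  calc 2 * (Ξ ⬝ᵥ P.mulVec (A.mulVec Ξ)) + 2 * (Ξ ⬝ᵥ P.mulVec (B.mulVec (gC.mulVec qq)))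
        + 2 * (Ξ ⬝ᵥ P.mulVec (B.mulVec (u - gC.mulVec qq)))
        + ε * (Ξ ⬝ᵥ P.mulVec Ξ)
      = 2 * (Ξ ⬝ᵥ P.mulVec (A.mulVec Ξ + B.mulVec u)) + ε * (Ξ ⬝ᵥ P.mulVec Ξ) := by
        rw [Matrix.mulVec_sub, Matrix.mulVec_sub, dotProduct_sub,
          Matrix.mulVec_add, dotProduct_add]
        ring
    _ ≤ 0 := hu
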